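/- Let m ≥ 0 and let V ∈ ℓ¹(ℤ, ℂ^{2×2}) satisfy 0 < ‖V‖₁² < m²/2 + 1 − m·√(m²/4 + 1). Define λ₊ := √(m² + 2(1 − ‖V‖₁² + √((1 − ‖V‖₁²)² − ‖V‖₁² m²))) and λ₋ := √(m² + 2(1 − ‖V‖₁² − √((1 − ‖V‖₁²)² − ‖V‖₁² m²))). Then D_V has no (real, embedded) eigenvalue in the union of intervals (−λ₊, −λ₋) ∪ (λ₋, λ₊). -/

import Mathlib

/-!
For `x` in the window, `m² < x² < m² + 4`: `x` lies inside the band of `D₀`, and the free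
transfer matrix at energy `x` has two distinct eigenvalues `k`, `k̄` on the unit circle.
In the corresponding eigen-coordinates of the state `(ψₙ⁽⁰⁾, ψₙ₋₁⁽¹⁾)` an eigenvector of
`D_V` loses at most a factor `1 - C|υₙ|` per step (here `‖V‖₁ < 1` bounds `ψₙ` by the state).
Since `∑ |υₙ| < ∞` and `ψ ∈ ℓ²` decays, a Levinson–Gronwall argument makes the state vanish
beyond some site, and `|υₙ| < 1` propagates this zero back along the recurrence, so `ψ = 0`.
-/
open scoped ComplexOrder
open Matrix

noncomputable section

abbrev Mat2 : Type := Matrix (Fin 2) (Fin 2) ℂ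
abbrev Vec2 : Type := EuclideanSpace ℂ (Fin 2)
abbrev Hsp : Type := lp (fun _ : ℤ => Vec2) 2

/-- A `2×2` complex matrix acting on `ℂ²` as a continuous linear map. -/
def mAct (A : Mat2) : Vec2 →L[ℂ] Vec2 := Matrix.toEuclideanCLM (𝕜 := ℂ) A

/-- The spectral (operator) norm of a `2×2` complex matrix. -/
def specNorm (A : Mat2) : ℝ := ‖mAct A‖

/-- The Hilbert–Schmidt (Frobenius) norm of a `2×2` complex matrix. -/
def hsNorm (A : Mat2) : ℝ := Real.sqrt (∑ i, ∑ j, ‖A i j‖ ^ 2)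

namespace Matrix.PosSemidef

/-- The positive semidefinite square root of a positive semidefinite matrix
(restored with its former Mathlib definition). -/
def sqrt {n 𝕜 : Type*} [Fintype n] [DecidableEq n] [RCLike 𝕜] {A : Matrix n n 𝕜}
    (hA : A.PosSemidef) : Matrix n n 𝕜 :=
  hA.1.eigenvectorUnitary.1 * diagonal ((↑) ∘ (Real.sqrt ·) ∘ hA.1.eigenvalues) *
  (star hA.1.eigenvectorUnitary : Matrix n n 𝕜)

theorem posSemidef_sqrt {n 𝕜 : Type*} [Fintype n] [DecidableEq n] [RCLike 𝕜]
    {A : Matrix n n 𝕜} (hA : A.PosSemidef) : hA.sqrt.PosSemidef := by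
  unfold sqrt
  exact (posSemidef_diagonal_iff.mpr (fun i => by simp [Function.comp, Real.sqrt_nonneg])).mul_mul_conjTranspose_same
    (hA.1.eigenvectorUnitary : Matrix n n 𝕜)

end Matrix.PosSemidef

def bMat (m : ℝ) : Mat2 := !![(-m : ℂ), 1; 1, (m : ℂ)]

def aMat : Mat2 := !![0, 0; -1, 0]

/-- `D0` is the free discrete Dirac operator with mass `m`. -/
def IsFreeDirac (m : ℝ) (D0 : Hsp →L[ℂ] Hsp) : Prop :=
  ∀ u : Hsp, ∀ n : ℤ,
    (D0 u) n = mAct aMat.transpose (u (n - 1)) + mAct (bMat m) (u n) + mAct aMat (u (n + 1))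

/-- `Vop` is the block-diagonal operator with blocks `υ n`. -/
def IsBlockDiagOp (υ : ℤ → Mat2) (Vop : Hsp →L[ℂ] Hsp) : Prop :=
  ∀ u : Hsp, ∀ n : ℤ, (Vop u) n = mAct (υ n) (u n)

/-- The spectrum `[−√(m²+4), −m] ∪ [m, √(m²+4)]` as a subset of `ℂ`. -/
def sigma0 (m : ℝ) : Set ℂ :=
  Complex.ofReal '' (Set.Icc (-Real.sqrt (m ^ 2 + 4)) (-m) ∪ Set.Icc m (Real.sqrt (m ^ 2 + 4)))

def T0mat (m : ℝ) (lam k : ℂ) : Mat2 :=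
  (k⁻¹ - k)⁻¹ • !![lam - m, 1 - k; 1 - k, lam + m]

def T1mat (m : ℝ) (lam k : ℂ) : Mat2 :=
  (k * (k⁻¹ - k)⁻¹) • !![lam - m, 1 - k; 1 - k⁻¹, lam + m]

def Tmat (m : ℝ) (lam k : ℂ) : ℤ → Mat2 := fun j =>
  if j = 0 then T0mat m lam k
  else if 0 < j then k ^ (j.toNat - 1) • T1mat m lam k
  else (k ^ ((-j).toNat - 1) • T1mat m lam k).transpose

def wMat (υ : ℤ → Mat2) (n : ℤ) : Mat2 :=
  (Matrix.posSemidef_conjTranspose_mul_self (υ n)).sqrt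

def sqrtwMat (υ : ℤ → Mat2) (n : ℤ) : Mat2 :=
  (Matrix.posSemidef_conjTranspose_mul_self (υ n)).posSemidef_sqrt.sqrt

/-- The Birman–Schwinger operator `K(z) = √W (D₀ − z)⁻¹ U √W`. -/
def Kop (D0 sW Uop : Hsp →L[ℂ] Hsp) (z : ℂ) : Hsp →L[ℂ] Hsp :=
  sW * Ring.inverse (D0 - z • (1 : Hsp →L[ℂ] Hsp)) * Uop * sW

/-- The element of `ℓ²(ℤ, ℂ²)` supported at site `j` equal to the `β`-th standard basis vector. -/
def deltaVec (j : ℤ) (β : Fin 2) : Hsp := lp.single 2 j (EuclideanSpace.single β (1 : ℂ))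

open Filter Topology ComplexConjugate

lemma mAct_apply (A : Mat2) (v : Vec2) (i : Fin 2) :
    mAct A v i = A i 0 * v 0 + A i 1 * v 1 := by
  simp [mAct, Matrix.mulVec, dotProduct, Fin.sum_univ_two]

lemma norm_le_norm_zero_add_norm_one (v : Vec2) : ‖v‖ ≤ ‖v 0‖ + ‖v 1‖ := by
  rw [EuclideanSpace.norm_eq, Fin.sum_univ_two, Real.sqrt_le_left (by positivity)]
  nlinarith [norm_nonneg (v 0), norm_nonneg (v 1)]

lemma Memℓp.tendsto_norm_cofinite_zero {α : Type*} {E : α → Type*}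
    [∀ i, NormedAddCommGroup (E i)] {p : ENNReal} {f : ∀ i, E i} (hf : Memℓp f p)
    (hp : 0 < p.toReal) : Tendsto (fun i => ‖f i‖) cofinite (𝓝 0) := by
  have h := ((hf.summable hp).tendsto_cofinite_zero).rpow_const (p := p.toReal⁻¹)
    (Or.inr (inv_nonneg.mpr hp.le))
  rw [Real.zero_rpow (inv_ne_zero hp.ne')] at h
  refine h.congr fun i => ?_
  rw [Real.rpow_rpow_inv (norm_nonneg _) hp.ne']

lemma eq_zero_of_one_sub_mul_le_succ {r c : ℕ → ℝ} {s : ℝ} (hr : ∀ n, 0 ≤ r n)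
    (hc : ∀ n, 0 ≤ c n) (hs : s < 1) (hsum : ∀ n, ∑ j ∈ Finset.range n, c j ≤ s)
    (hrec : ∀ n, (1 - c n) * r n ≤ r (n + 1)) (hlim : Tendsto r atTop (𝓝 0)) : r 0 = 0 := by
  have hkey : ∀ n, (1 - ∑ j ∈ Finset.range n, c j) * r 0 ≤ r n := by
    intro n
    induction n with
    | zero => simp
    | succ n ih =>
      have hpart : 0 ≤ ∑ j ∈ Finset.range n, c j := Finset.sum_nonneg fun j _ => hc j
      have hcn : c n ≤ 1 := by
        have := hsum (n + 1)
        rw [Finset.sum_range_succ] at this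
        linarith
      rw [Finset.sum_range_succ]
      calc (1 - (∑ j ∈ Finset.range n, c j + c n)) * r 0
          ≤ (1 - c n) * ((1 - ∑ j ∈ Finset.range n, c j) * r 0) := by
            nlinarith [mul_nonneg (mul_nonneg (hc n) hpart) (hr 0)]
        _ ≤ (1 - c n) * r n := mul_le_mul_of_nonneg_left ih (by linarith)
        _ ≤ r (n + 1) := hrec n
  have hbound : ∀ n, (1 - s) * r 0 ≤ r n := fun n =>
    le_trans (mul_le_mul_of_nonneg_right (by linarith [hsum n]) (hr 0)) (hkey n)
  have := ge_of_tendsto hlim (Eventually.of_forall hbound)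
  nlinarith [hr 0]

lemma eventually_eq_zero_of_one_sub_mul_le_succ {r c : ℤ → ℝ} (hr : ∀ n, 0 ≤ r n)
    (hc : ∀ n, 0 ≤ c n) (hcs : Summable c) (hrec : ∀ n, (1 - c n) * r n ≤ r (n + 1))
    (hlim : Tendsto r atTop (𝓝 0)) : ∀ᶠ n in atTop, r n = 0 := by
  have hcs' : Summable fun j : ℕ => c j := hcs.comp_injective Nat.cast_injective
  obtain ⟨N, hN⟩ := eventually_atTop.mp <|
    (tendsto_sum_nat_add fun j : ℕ => c j).eventually_lt_const (by norm_num : (0 : ℝ) < 1 / 2)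
  filter_upwards [eventually_ge_atTop (N : ℤ)] with M hM
  lift M to ℕ using (Int.natCast_nonneg N).trans hM
  suffices r (M + (0 : ℕ)) = 0 by simpa using this
  refine eq_zero_of_one_sub_mul_le_succ (r := fun j => r (M + j)) (c := fun j => c (M + j))
    (fun j => hr _) (fun j => hc _) (by norm_num : (1 / 2 : ℝ) < 1) (fun n => ?_)
    (fun j => by simpa [add_assoc] using hrec (M + j)) ?_
  · calc ∑ j ∈ Finset.range n, c (M + j) = ∑ j ∈ Finset.range n, c ((j + M : ℕ) : ℤ) := by
          push_cast; simp only [add_comm]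
      _ ≤ ∑' j : ℕ, c ((j + M : ℕ) : ℤ) :=
          ((summable_nat_add_iff M).mpr hcs').sum_le_tsum _ fun j _ => hc _
      _ ≤ 1 / 2 := (hN M (by exact_mod_cast hM)).le
  · exact hlim.comp <| tendsto_atTop_add_const_left _ _ tendsto_natCast_atTop_atTop

lemma exists_norm_eq_one_sq_add_one_eq (t : ℝ) (ht : |t| < 2) :
    ∃ k : ℂ, ‖k‖ = 1 ∧ k.im ≠ 0 ∧ k ^ 2 + 1 = t * k := by
  have hpos : 0 < 1 - t ^ 2 / 4 := by nlinarith [sq_abs t, abs_nonneg t]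
  set s := Real.sqrt (1 - t ^ 2 / 4)
  have hs : s ^ 2 = 1 - t ^ 2 / 4 := Real.sq_sqrt hpos.le
  refine ⟨⟨t / 2, s⟩, ?_, (Real.sqrt_pos.mpr hpos).ne', ?_⟩
  · rw [Complex.norm_def, Complex.normSq_mk, Real.sqrt_eq_one]
    nlinarith
  · apply Complex.ext <;> simp [pow_two] <;> nlinarith

lemma lt_one_of_lt_sq_div_two_add_one_sub {m q : ℝ} (hm : 0 ≤ m)
    (hq : q < m ^ 2 / 2 + 1 - m * Real.sqrt (m ^ 2 / 4 + 1)) : q < 1 := by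
  have : m / 2 ≤ Real.sqrt (m ^ 2 / 4 + 1) :=
    Real.le_sqrt_of_sq_le (by nlinarith)
  nlinarith

lemma lt_sq_and_sq_lt_of_mem_window {m q x : ℝ} (hq0 : 0 ≤ q) (hq1 : q < 1)
    (hx : x ∈ Set.Ioo (-Real.sqrt (m ^ 2 + 2 * (1 - q + Real.sqrt ((1 - q) ^ 2 - q * m ^ 2))))
        (-Real.sqrt (m ^ 2 + 2 * (1 - q - Real.sqrt ((1 - q) ^ 2 - q * m ^ 2)))) ∪
      Set.Ioo (Real.sqrt (m ^ 2 + 2 * (1 - q - Real.sqrt ((1 - q) ^ 2 - q * m ^ 2))))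
        (Real.sqrt (m ^ 2 + 2 * (1 - q + Real.sqrt ((1 - q) ^ 2 - q * m ^ 2))))) :
    m ^ 2 < x ^ 2 ∧ x ^ 2 < m ^ 2 + 4 := by
  set S := Real.sqrt ((1 - q) ^ 2 - q * m ^ 2)
  have hS0 : 0 ≤ S := Real.sqrt_nonneg _
  have hS1 : S ≤ 1 - q := Real.sqrt_le_iff.mpr ⟨by linarith, by nlinarith [sq_nonneg m]⟩
  set lamM := Real.sqrt (m ^ 2 + 2 * (1 - q - S))
  set lamP := Real.sqrt (m ^ 2 + 2 * (1 - q + S))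
  have hM : lamM ^ 2 = m ^ 2 + 2 * (1 - q - S) := Real.sq_sqrt (by nlinarith)
  have hP : lamP ^ 2 = m ^ 2 + 2 * (1 - q + S) := Real.sq_sqrt (by nlinarith)
  have habs : lamM < |x| ∧ |x| < lamP := by
    have : 0 ≤ lamM := Real.sqrt_nonneg _
    rcases hx with ⟨h1, h2⟩ | ⟨h1, h2⟩
    · rw [abs_of_neg (by linarith)]; constructor <;> linarith
    · rw [abs_of_pos (by linarith)]; constructor <;> linarith
  have hlo : lamM ^ 2 < x ^ 2 := by
    rw [← sq_abs x]; exact pow_lt_pow_left₀ habs.1 (Real.sqrt_nonneg _) two_ne_zero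
  have hhi : x ^ 2 < lamP ^ 2 := by
    rw [← sq_abs x]; exact pow_lt_pow_left₀ habs.2 (abs_nonneg x) two_ne_zero
  constructor <;> nlinarith

/-- The two components of `(D₀ - x) u = -w` at site `n`, solved for `u n 1` and `u (n + 1) 0`;
with `w n = υ n (u n)` this is the eigenvalue equation `(D₀ + V) u = x u`. -/
def DiracRecurrence (m x : ℝ) (u w : ℤ → Vec2) : Prop :=
  ∀ n, u n 1 = u (n - 1) 1 + (x + m) * u n 0 - w n 0 ∧
    u (n + 1) 0 = u n 0 + (m - x) * u n 1 + w n 1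

lemma diracRecurrence_of_eigen {m x : ℝ} {υ : ℤ → Mat2} {D0 Vop : Hsp →L[ℂ] Hsp} {ψ : Hsp}
    (hD0 : IsFreeDirac m D0) (hVop : IsBlockDiagOp υ Vop) (hψ : (D0 + Vop) ψ = (x : ℂ) • ψ) :
    DiracRecurrence m x (fun n => ψ n) (fun n => mAct (υ n) (ψ n)) := by
  intro n
  have h : mAct aMat.transpose (ψ (n - 1)) + mAct (bMat m) (ψ n) + mAct aMat (ψ (n + 1))
      + mAct (υ n) (ψ n) = (x : ℂ) • ψ n := by
    rw [← hD0, ← hVop, ← Pi.add_apply, ← lp.coeFn_add, ← _root_.add_apply, hψ]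
    rfl
  dsimp only
  generalize mAct (υ n) (ψ n) = w at h ⊢
  have h0 := congrArg (fun v : Vec2 => v 0) h
  have h1 := congrArg (fun v : Vec2 => v 1) h
  simp [mAct_apply, aMat, bMat] at h0 h1
  constructor
  · linear_combination h0
  · linear_combination -h1

/-- Pairs the state `(u n 0, u (n - 1) 1)` with a left eigenvector of the free transfer matrix
when `k² + 1 = (2 - x² + m²) k`. -/
def eigenCoord (m x : ℝ) (k : ℂ) (u : ℤ → Vec2) (n : ℤ) : ℂ :=
  (k - 1) * u n 0 + (m - x) * u (n - 1) 1

section EigenCoord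

variable {m x : ℝ} {k : ℂ} {u w : ℤ → Vec2}

lemma eigenCoord_succ (hk : k ^ 2 + 1 = (2 - x ^ 2 + m ^ 2) * k) (hu : DiracRecurrence m x u w)
    (n : ℤ) : eigenCoord m x k u (n + 1) =
      k * eigenCoord m x k u n - k * (m - x) * w n 0 + (k - 1) * w n 1 := by
  simp only [eigenCoord, add_sub_cancel_right, (hu n).2, (hu n).1]
  linear_combination (-u n 0) * hk

lemma norm_eigenCoord_le_succ (hk1 : ‖k‖ = 1) (hk : k ^ 2 + 1 = (2 - x ^ 2 + m ^ 2) * k)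
    (hu : DiracRecurrence m x u w) (n : ℤ) :
    ‖eigenCoord m x k u n‖ ≤ ‖eigenCoord m x k u (n + 1)‖ + (‖(m - x : ℂ)‖ + 2) * ‖w n‖ := by
  have hk2 : ‖k - 1‖ ≤ 2 := (norm_sub_le _ _).trans (by rw [hk1, norm_one]; norm_num)
  have hw0 := PiLp.norm_apply_le (w n) 0
  have hw1 := PiLp.norm_apply_le (w n) 1
  calc ‖eigenCoord m x k u n‖ = ‖k * eigenCoord m x k u n‖ := by rw [norm_mul, hk1, one_mul]
    _ = ‖eigenCoord m x k u (n + 1) + k * (m - x) * w n 0 - (k - 1) * w n 1‖ := by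
        rw [eigenCoord_succ hk hu]; ring_nf
    _ ≤ ‖eigenCoord m x k u (n + 1)‖ + ‖(m - x : ℂ)‖ * ‖w n 0‖ + ‖k - 1‖ * ‖w n 1‖ := by
        refine (norm_sub_le _ _).trans ?_
        rw [norm_mul (k - 1)]
        gcongr
        refine (norm_add_le _ _).trans_eq ?_
        rw [norm_mul, norm_mul, hk1, one_mul]
    _ ≤ _ := by nlinarith [norm_nonneg (w n 1), norm_nonneg (m - x : ℂ)]

lemma norm_eigenCoord_le (n : ℤ) :
    ‖eigenCoord m x k u n‖ ≤ ‖k - 1‖ * ‖u n‖ + ‖(m - x : ℂ)‖ * ‖u (n - 1)‖ := by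
  refine (norm_add_le _ _).trans ?_
  rw [norm_mul, norm_mul]
  gcongr <;> exact PiLp.norm_apply_le _ _

lemma norm_sub_mul_norm_le_eigenCoord (k' : ℂ) (n : ℤ) :
    ‖k - k'‖ * ‖u n 0‖ ≤ ‖eigenCoord m x k u n‖ + ‖eigenCoord m x k' u n‖ := by
  rw [← norm_mul]
  exact (congrArg norm (by simp only [eigenCoord]; ring)).trans_le (norm_sub_le _ _)

lemma norm_mul_norm_le_eigenCoord (n : ℤ) :
    ‖(m - x : ℂ)‖ * ‖u (n - 1) 1‖ ≤ ‖eigenCoord m x k u n‖ + ‖k - 1‖ * ‖u n 0‖ := by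
  rw [← norm_mul, ← norm_mul]
  exact (congrArg norm (by simp only [eigenCoord]; ring)).trans_le (norm_sub_le _ _)

end EigenCoord

section DiracRecurrence

variable {m x Q : ℝ} {u w : ℤ → Vec2}

lemma DiracRecurrence.one_sub_mul_norm_le (hu : DiracRecurrence m x u w) {n : ℤ}
    (hw : ‖w n‖ ≤ Q * ‖u n‖) :
    (1 - Q) * ‖u n‖ ≤ (1 + ‖(x + m : ℂ)‖) * ‖u n 0‖ + ‖u (n - 1) 1‖ := by
  have h1 : ‖u n 1‖ ≤ ‖u (n - 1) 1‖ + ‖(x + m : ℂ)‖ * ‖u n 0‖ + ‖w n‖ := by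
    rw [(hu n).1, ← norm_mul]
    refine (norm_sub_le _ _).trans ?_
    gcongr
    · exact norm_add_le _ _
    · exact PiLp.norm_apply_le _ _
  nlinarith [norm_le_norm_zero_add_norm_one (u n)]

lemma DiracRecurrence.exists_norm_le_mul_eigenCoord {k k' : ℂ} (hu : DiracRecurrence m x u w)
    (hkk' : k ≠ k') (hmx : (m - x : ℂ) ≠ 0) (hQ : Q < 1) (hw : ∀ n, ‖w n‖ ≤ Q * ‖u n‖) :
    ∃ C, 0 ≤ C ∧ ∀ n,
      ‖u n‖ ≤ C * (‖eigenCoord m x k u n‖ + ‖eigenCoord m x k' u n‖) := by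
  have hα : 0 < ‖k - k'‖ := norm_pos_iff.mpr (sub_ne_zero.mpr hkk')
  have hδ : 0 < ‖(m - x : ℂ)‖ := norm_pos_iff.mpr hmx
  set A := (1 + ‖(x + m : ℂ)‖) / ‖k - k'‖ + (1 + ‖k - 1‖ / ‖k - k'‖) / ‖(m - x : ℂ)‖
  refine ⟨A / (1 - Q), by positivity, fun n => ?_⟩
  set r := ‖eigenCoord m x k u n‖ + ‖eigenCoord m x k' u n‖
  have hf : ‖u n 0‖ ≤ r / ‖k - k'‖ := by
    rw [le_div_iff₀ hα, mul_comm]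
    exact norm_sub_mul_norm_le_eigenCoord k' n
  have hg : ‖u (n - 1) 1‖ ≤ (r + ‖k - 1‖ * (r / ‖k - k'‖)) / ‖(m - x : ℂ)‖ := by
    rw [le_div_iff₀ hδ, mul_comm]
    refine (norm_mul_norm_le_eigenCoord (k := k) n).trans ?_
    gcongr
    exact le_add_of_nonneg_right (norm_nonneg _)
  rw [div_mul_eq_mul_div, le_div_iff₀ (by linarith), mul_comm]
  calc (1 - Q) * ‖u n‖ ≤ (1 + ‖(x + m : ℂ)‖) * ‖u n 0‖ + ‖u (n - 1) 1‖ :=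
        hu.one_sub_mul_norm_le (hw n)
    _ ≤ (1 + ‖(x + m : ℂ)‖) * (r / ‖k - k'‖)
          + (r + ‖k - 1‖ * (r / ‖k - k'‖)) / ‖(m - x : ℂ)‖ := by gcongr
    _ = A * r := by ring

lemma DiracRecurrence.eq_zero_sub_one (hu : DiracRecurrence m x u w) (hQ : Q < 1)
    (hw : ∀ n, ‖w n‖ ≤ Q * ‖u n‖) {n : ℤ} (h : u n = 0) : u (n - 1) = 0 := by
  have hwn : w n = 0 := norm_le_zero_iff.mp (by simpa [h] using hw n)
  have hg : u (n - 1) 1 = 0 := by simpa [h, hwn, eq_comm] using (hu n).1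
  have hf : u (n - 1) 0 = -w (n - 1) 1 := by
    have := (hu (n - 1)).2
    rw [sub_add_cancel, h, hg] at this
    simp only [PiLp.zero_apply, mul_zero, add_zero] at this
    linear_combination -this
  have hle : ‖u (n - 1)‖ ≤ Q * ‖u (n - 1)‖ :=
    calc ‖u (n - 1)‖ ≤ ‖u (n - 1) 0‖ + ‖u (n - 1) 1‖ := norm_le_norm_zero_add_norm_one _
      _ = ‖w (n - 1) 1‖ := by rw [hf, hg, norm_neg, norm_zero, add_zero]
      _ ≤ Q * ‖u (n - 1)‖ := (PiLp.norm_apply_le _ _).trans (hw _)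
  exact norm_le_zero_iff.mp (by nlinarith [norm_nonneg (u (n - 1))])

lemma DiracRecurrence.eq_zero_of_le (hu : DiracRecurrence m x u w) (hQ : Q < 1)
    (hw : ∀ n, ‖w n‖ ≤ Q * ‖u n‖) {N : ℤ} (hN : u N = 0) {n : ℤ} (hn : n ≤ N) : u n = 0 :=
  Int.leInductionDown (motive := fun n _ => u n = 0) hN
    (fun _ _ ih => hu.eq_zero_sub_one hQ hw ih) n hn

theorem DiracRecurrence.eq_zero {v : ℤ → ℝ} (hu : DiracRecurrence m x u w)
    (hlo : m ^ 2 < x ^ 2) (hhi : x ^ 2 < m ^ 2 + 4) (hv0 : ∀ n, 0 ≤ v n) (hv : Summable v)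
    (hvQ : ∀ n, v n ≤ Q) (hQ : Q < 1) (hw : ∀ n, ‖w n‖ ≤ v n * ‖u n‖)
    (hlim : Tendsto (fun n => ‖u n‖) atTop (𝓝 0)) : u = 0 := by
  obtain ⟨k, hk1, hkim, hk⟩ := exists_norm_eq_one_sq_add_one_eq (2 - x ^ 2 + m ^ 2)
    (abs_lt.mpr ⟨by linarith, by linarith⟩)
  push_cast at hk
  have hk1' : ‖conj k‖ = 1 := by rwa [Complex.norm_conj]
  have hk' : conj k ^ 2 + 1 = (2 - x ^ 2 + m ^ 2) * conj k := by
    simpa [map_ofNat] using congrArg conj hk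
  have hkk' : k ≠ conj k := fun h => hkim (Complex.conj_eq_iff_im.mp h.symm)
  have hmx : (m - x : ℂ) ≠ 0 := by
    rw [sub_ne_zero, Ne, Complex.ofReal_inj]
    rintro rfl
    exact lt_irrefl _ hlo
  have hwQ : ∀ n, ‖w n‖ ≤ Q * ‖u n‖ := fun n =>
    (hw n).trans (mul_le_mul_of_nonneg_right (hvQ n) (norm_nonneg _))
  obtain ⟨C, hC0, hC⟩ := hu.exists_norm_le_mul_eigenCoord hkk' hmx hQ hwQ
  set r := fun n => ‖eigenCoord m x k u n‖ + ‖eigenCoord m x (conj k) u n‖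
  set L := 2 * (‖(m - x : ℂ)‖ + 2)
  have hrec : ∀ n, (1 - L * C * v n) * r n ≤ r (n + 1) := by
    intro n
    have h1 := norm_eigenCoord_le_succ hk1 hk hu n
    have h2 := norm_eigenCoord_le_succ hk1' hk' hu n
    have h3 : ‖w n‖ ≤ v n * (C * r n) := (hw n).trans (mul_le_mul_of_nonneg_left (hC n) (hv0 n))
    have h4 : (‖(m - x : ℂ)‖ + 2) * ‖w n‖ ≤ (‖(m - x : ℂ)‖ + 2) * (v n * (C * r n)) :=
      mul_le_mul_of_nonneg_left h3 (by positivity)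
    simp only [r]
    linarith
  have hcoord : ∀ k', Tendsto (fun n => ‖eigenCoord m x k' u n‖) atTop (𝓝 0) := fun k' => by
    refine squeeze_zero (fun _ => norm_nonneg _) (fun n => norm_eigenCoord_le n) ?_
    have hshift := hlim.comp (tendsto_atTop_add_const_right atTop (-1 : ℤ) tendsto_id)
    simpa [← sub_eq_add_neg] using (hlim.const_mul ‖k' - 1‖).add (hshift.const_mul ‖(m - x : ℂ)‖)
  have hr0 : ∀ᶠ n in atTop, r n = 0 :=
    eventually_eq_zero_of_one_sub_mul_le_succ (fun n => by positivity)
      (fun n => by have := hv0 n; positivity) (hv.mul_left (L * C)) hrec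
      (by simpa using (hcoord k).add (hcoord (conj k)))
  funext n
  obtain ⟨N, hrN, hnN⟩ := (hr0.and (eventually_ge_atTop n)).exists
  have hCN : ‖u N‖ ≤ C * r N := hC N
  rw [hrN, mul_zero] at hCN
  exact hu.eq_zero_of_le hQ hwQ (norm_le_zero_iff.mp hCN) hnN

end DiracRecurrence

theorem stmt1_general (m : ℝ) (hm : 0 ≤ m) (υ : ℤ → Mat2)
    (hsum : Summable fun n => specNorm (υ n))
    (Q : ℝ) (hQ : Q = ∑' n, specNorm (υ n))
    (hsmall : Q ^ 2 < m ^ 2 / 2 + 1 - m * Real.sqrt (m ^ 2 / 4 + 1))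
    (lamP lamM : ℝ)
    (hlamP : lamP =
      Real.sqrt (m ^ 2 + 2 * (1 - Q ^ 2 + Real.sqrt ((1 - Q ^ 2) ^ 2 - Q ^ 2 * m ^ 2))))
    (hlamM : lamM =
      Real.sqrt (m ^ 2 + 2 * (1 - Q ^ 2 - Real.sqrt ((1 - Q ^ 2) ^ 2 - Q ^ 2 * m ^ 2))))
    (D0 Vop : Hsp →L[ℂ] Hsp) (hD0 : IsFreeDirac m D0) (hVop : IsBlockDiagOp υ Vop)
    (x : ℝ) (hx : x ∈ Set.Ioo (-lamP) (-lamM) ∪ Set.Ioo lamM lamP) :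
    ¬ ∃ ψ : Hsp, ψ ≠ 0 ∧ (D0 + Vop) ψ = (x : ℂ) • ψ := by
  rintro ⟨ψ, hψ0, hψ⟩
  have hQ2 : Q ^ 2 < 1 := lt_one_of_lt_sq_div_two_add_one_sub hm hsmall
  subst hlamP hlamM
  obtain ⟨hlo, hhi⟩ := lt_sq_and_sq_lt_of_mem_window (sq_nonneg Q) hQ2 hx
  have hvQ : ∀ n, specNorm (υ n) ≤ Q := fun n =>
    hQ ▸ hsum.le_tsum n fun j _ => norm_nonneg _
  have hψlim : Tendsto (fun n => ‖ψ n‖) atTop (𝓝 0) :=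
    ((lp.memℓp ψ).tendsto_norm_cofinite_zero (by norm_num)).mono_left atTop_le_cofinite
  refine hψ0 (lp.ext ?_)
  exact (diracRecurrence_of_eigen hD0 hVop hψ).eq_zero hlo hhi (fun n => norm_nonneg _) hsum hvQ
    (by nlinarith) (fun n => (mAct (υ n)).le_opNorm _) hψlim

/-- If `0 < ‖V‖₁² < m²/2 + 1 − m√(m²/4 + 1)`, then `D_V` has no eigenvalue in
`(−λ₊, −λ₋) ∪ (λ₋, λ₊)`. -/
theorem stmt1 (m : ℝ) (hm : 0 ≤ m) (υ : ℤ → Mat2)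
    (hsum : Summable fun n => specNorm (υ n))
    (Q : ℝ) (hQ : Q = ∑' n, specNorm (υ n))
    (hpos : 0 < Q ^ 2)
    (hsmall : Q ^ 2 < m ^ 2 / 2 + 1 - m * Real.sqrt (m ^ 2 / 4 + 1))
    (lamP lamM : ℝ)
    (hlamP : lamP =
      Real.sqrt (m ^ 2 + 2 * (1 - Q ^ 2 + Real.sqrt ((1 - Q ^ 2) ^ 2 - Q ^ 2 * m ^ 2))))
    (hlamM : lamM =
      Real.sqrt (m ^ 2 + 2 * (1 - Q ^ 2 - Real.sqrt ((1 - Q ^ 2) ^ 2 - Q ^ 2 * m ^ 2))))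
    (D0 Vop : Hsp →L[ℂ] Hsp) (hD0 : IsFreeDirac m D0) (hVop : IsBlockDiagOp υ Vop)
    (x : ℝ) (hx : x ∈ Set.Ioo (-lamP) (-lamM) ∪ Set.Ioo lamM lamP) :
    ¬ ∃ ψ : Hsp, ψ ≠ 0 ∧ (D0 + Vop) ψ = (x : ℂ) • ψ :=
  stmt1_general m hm υ hsum Q hQ hsmall lamP lamM hlamP hlamM D0 Vop hD0 hVop x hx
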